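/- For the two-variable case of the interpolation procedure: let m, n be positive integers, θ ∈ [0,1], and p, q, r ∈ [1,∞)^m with 1/r_i = θ/p_i + (1-θ)/q_i for each i. Then for every scalar matrix a = (a_i)_{i ∈ {1,…,n}^m}, ‖a‖_r ≤ ‖a‖_p^θ · ‖a‖_q^{1-θ}. -/

import Mathlib

open Finset

/-- The mixed `ℓ_{p_1}(ℓ_{p_2}(⋯ℓ_{p_m}))` norm of a scalar matrix
`a = (a_i)_{i ∈ {1,…,n}^m}`. -/
noncomputable def mixedNorm (n : ℕ) : (m : ℕ) → (Fin m → ℝ) → ((Fin m → Fin n) → ℂ) → ℝ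
  | 0, _, a => ‖a (fun i => i.elim0)‖
  | m + 1, p, a =>
      (∑ j : Fin n,
        (mixedNorm n m (fun i => p i.succ) (fun f => a (Fin.cons j f))) ^ p 0) ^ (1 / p 0)

/-!
Induction on the number of indices. Write `A_j`, `B_j`, `C_j` for the `p`-, `q`-, `r`-norms of the
slice of `a` with first index `j`. By induction `C_j ≤ A_j ^ θ * B_j ^ (1 - θ)`, and the outer
`ℓ^r` norm of `A ^ θ * B ^ (1 - θ)` is bounded by Hölder's inequality with exponents `p/θ` and
`q/(1-θ)`, whose reciprocals add up to `1/r`. At the endpoints `θ = 0, 1` the exponent `r` equals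
`q`, resp. `p`.
-/

open Real

theorem pos_of_one_div_eq_interp {θ p q r : ℝ} (hθ0 : 0 < θ) (hθ1 : θ < 1) (hp : 0 < p)
    (hq : 0 < q) (hconv : 1 / r = θ / p + (1 - θ) / q) : 0 < r := by
  have hθ1' : 0 < 1 - θ := sub_pos.mpr hθ1
  exact one_div_pos.mp (hconv ▸ by positivity)

theorem Lr_le_Lp_rpow_mul_Lq_rpow_of_nonneg {ι : Type*} (s : Finset ι) {f g : ι → ℝ}
    (hf : ∀ i ∈ s, 0 ≤ f i) (hg : ∀ i ∈ s, 0 ≤ g i) {θ p q r : ℝ} (hθ0 : 0 < θ) (hθ1 : θ < 1)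
    (hp : 0 < p) (hq : 0 < q) (hconv : 1 / r = θ / p + (1 - θ) / q) :
    (∑ i ∈ s, (f i ^ θ * g i ^ (1 - θ)) ^ r) ^ (1 / r) ≤
      ((∑ i ∈ s, f i ^ p) ^ (1 / p)) ^ θ * ((∑ i ∈ s, g i ^ q) ^ (1 / q)) ^ (1 - θ) := by
  have hθ1' : 0 < 1 - θ := sub_pos.mpr hθ1
  have hr : 0 < r := pos_of_one_div_eq_interp hθ0 hθ1 hp hq hconv
  have hpqr : (p / θ).HolderTriple (q / (1 - θ)) r :=
    ⟨by rw [inv_div, inv_div, ← one_div, hconv], by positivity, by positivity⟩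
  have H := Real.Lr_rpow_le_Lp_mul_Lq_of_nonneg s hpqr
    (fun i hi => rpow_nonneg (hf i hi) θ) (fun i hi => rpow_nonneg (hg i hi) (1 - θ))
  have hfp : ∀ i ∈ s, (f i ^ θ) ^ (p / θ) = f i ^ p := fun i hi => by
    rw [← rpow_mul (hf i hi), mul_div_cancel₀ _ hθ0.ne']
  have hgq : ∀ i ∈ s, (g i ^ (1 - θ)) ^ (q / (1 - θ)) = g i ^ q := fun i hi => by
    rw [← rpow_mul (hg i hi), mul_div_cancel₀ _ hθ1'.ne']
  rw [sum_congr rfl hfp, sum_congr rfl hgq] at H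
  have hF : 0 ≤ ∑ i ∈ s, f i ^ p := sum_nonneg fun i hi => rpow_nonneg (hf i hi) p
  have hG : 0 ≤ ∑ i ∈ s, g i ^ q := sum_nonneg fun i hi => rpow_nonneg (hg i hi) q
  calc (∑ i ∈ s, (f i ^ θ * g i ^ (1 - θ)) ^ r) ^ (1 / r)
      ≤ ((∑ i ∈ s, f i ^ p) ^ (r / (p / θ)) * (∑ i ∈ s, g i ^ q) ^ (r / (q / (1 - θ)))) ^ (1 / r) :=
        rpow_le_rpow (sum_nonneg fun i hi => rpow_nonneg
          (mul_nonneg (rpow_nonneg (hf i hi) θ) (rpow_nonneg (hg i hi) _)) r) H (by positivity)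
    _ = _ := by
        rw [mul_rpow (by positivity) (by positivity), ← rpow_mul hF, ← rpow_mul hG,
          ← rpow_mul hF, ← rpow_mul hG]
        congr 2 <;> field_simp

theorem mixedNorm_nonneg (n m : ℕ) (p : Fin m → ℝ) (a : (Fin m → Fin n) → ℂ) :
    0 ≤ mixedNorm n m p a := by
  induction m with
  | zero => exact norm_nonneg _
  | succ m ih => exact rpow_nonneg (sum_nonneg fun j _ => rpow_nonneg (ih _ _) _) _

theorem mixedNorm_le_rpow_mul_rpow {n m : ℕ} {θ : ℝ} (hθ0 : 0 < θ) (hθ1 : θ < 1)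
    {p q r : Fin m → ℝ} (hp : ∀ i, 0 < p i) (hq : ∀ i, 0 < q i)
    (hconv : ∀ i, 1 / r i = θ / p i + (1 - θ) / q i) (a : (Fin m → Fin n) → ℂ) :
    mixedNorm n m r a ≤ mixedNorm n m p a ^ θ * mixedNorm n m q a ^ (1 - θ) := by
  induction m with
  | zero =>
    unfold mixedNorm
    rw [← rpow_add' (norm_nonneg _) (by simp), add_sub_cancel, rpow_one]
  | succ m ih =>
    have hr : 0 < r 0 := pos_of_one_div_eq_interp hθ0 hθ1 (hp 0) (hq 0) (hconv 0)
    unfold mixedNorm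
    calc _ ≤ (∑ j : Fin n, (mixedNorm n m (fun i => p i.succ) (fun f => a (Fin.cons j f)) ^ θ *
              mixedNorm n m (fun i => q i.succ) (fun f => a (Fin.cons j f)) ^ (1 - θ)) ^ r 0)
              ^ (1 / r 0) := by
          refine rpow_le_rpow (sum_nonneg fun j _ => rpow_nonneg (mixedNorm_nonneg ..) _)
            (sum_le_sum fun j _ => rpow_le_rpow (mixedNorm_nonneg ..) ?_ hr.le) (by positivity)
          exact ih (fun i => hp i.succ) (fun i => hq i.succ) (fun i => hconv i.succ) _
      _ ≤ _ := Lr_le_Lp_rpow_mul_Lq_rpow_of_nonneg univ (fun j _ => mixedNorm_nonneg ..)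
          (fun j _ => mixedNorm_nonneg ..) hθ0 hθ1 (hp 0) (hq 0) (hconv 0)

theorem mixedNorm_interpolation_two_general (m n : ℕ)
    (θ : ℝ) (hθ0 : 0 ≤ θ) (hθ1 : θ ≤ 1)
    (p q r : Fin m → ℝ) (hp : ∀ i, 1 ≤ p i) (hq : ∀ i, 1 ≤ q i)
    (hconv : ∀ i, 1 / r i = θ / p i + (1 - θ) / q i)
    (a : (Fin m → Fin n) → ℂ) :
    mixedNorm n m r a ≤ (mixedNorm n m p a) ^ θ * (mixedNorm n m q a) ^ (1 - θ) := by
  rcases hθ0.eq_or_lt with rfl | hθ0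
  · obtain rfl : r = q := funext fun i => by simpa using hconv i
    simp
  rcases hθ1.eq_or_lt with rfl | hθ1
  · obtain rfl : r = p := funext fun i => by simpa using hconv i
    simp
  exact mixedNorm_le_rpow_mul_rpow hθ0 hθ1 (fun i => one_pos.trans_le (hp i))
    (fun i => one_pos.trans_le (hq i)) hconv a

/-- **Two-exponent interpolation for mixed norms**: if `θ ∈ [0,1]` and
`1/r_i = θ/p_i + (1-θ)/q_i` for each `i`, then
`‖a‖_r ≤ ‖a‖_p^θ ⬝ ‖a‖_q^{1-θ}` for every scalar matrix `a`. -/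
theorem mixedNorm_interpolation_two (m n : ℕ) (hm : 0 < m) (hn : 0 < n)
    (θ : ℝ) (hθ0 : 0 ≤ θ) (hθ1 : θ ≤ 1)
    (p q r : Fin m → ℝ) (hp : ∀ i, 1 ≤ p i) (hq : ∀ i, 1 ≤ q i) (hr : ∀ i, 1 ≤ r i)
    (hconv : ∀ i, 1 / r i = θ / p i + (1 - θ) / q i)
    (a : (Fin m → Fin n) → ℂ) :
    mixedNorm n m r a ≤ (mixedNorm n m p a) ^ θ * (mixedNorm n m q a) ^ (1 - θ) :=
  mixedNorm_interpolation_two_general m n θ hθ0 hθ1 p q r hp hq hconv a
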